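/- Suppose a > b + 1 and 0 ≤ b ≤ 1, and let I be a finite word in {−1, +1} of length M ≥ 1. Then the affine map Λ_I = Λ_{I_M} ∘ ⋯ ∘ Λ_{I₁} has a unique fixed point θ ∈ ℝ², and this fixed point is a saddle: the eigenvalues ν₁, ν₂ of the linear part A = DΛ_I satisfy |ν₁| ≥ λ^M > 1 and |ν₂| ≤ μ^M < 1, where λ = (a + √(a² − 4b))/2 and μ = b/λ. -/

import Mathlib

/-!
Let `λ` be the larger root of `x² - a x + b`. Each `DΛ_σ` maps the cone `λ |y| ≤ |x|` into itself
and multiplies `|x|` by at least `λ` there, so `A = DΛ_I` does the same with factor `λ^M`. The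
induced action of `A` on slopes then maps `[-1/λ, 1/λ]` into itself and has a fixed point: a real
eigenvector in the cone, with eigenvalue `|ν₁| ≥ λ^M`. Since `ν₁ ν₂ = det A = b^M = (λ μ)^M`, the
other eigenvalue satisfies `|ν₂| ≤ μ^M < 1`. So `1` is not an eigenvalue of `A`, and the affine map
`Λ_I = A · + w` has exactly one fixed point.
-/

open Matrix Polynomial

section LargerRoot

variable {a b x : ℝ}

noncomputable def largerRoot (a b : ℝ) : ℝ := (a + √(a ^ 2 - 4 * b)) / 2

lemma lt_largerRoot (h : x ^ 2 - a * x + b < 0) : x < largerRoot a b := by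
  have : 2 * x - a < √(a ^ 2 - 4 * b) := Real.lt_sqrt_of_sq_lt (by nlinarith)
  unfold largerRoot
  linarith

lemma largerRoot_mul_self_add (h : 4 * b ≤ a ^ 2) :
    largerRoot a b * largerRoot a b + b = a * largerRoot a b := by
  unfold largerRoot
  nlinarith [Real.sq_sqrt (sub_nonneg.2 h)]

lemma div_largerRoot_lt_one (hab : b + 1 < a) : b / largerRoot a b < 1 := by
  have hl : 1 < largerRoot a b := lt_largerRoot (by nlinarith)
  have hroot := largerRoot_mul_self_add (a := a) (b := b) (by nlinarith [sq_nonneg (a - 2)])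
  have : a - 1 < largerRoot a b := lt_largerRoot (by nlinarith)
  rw [div_lt_one (by linarith)]
  nlinarith

end LargerRoot

section TwoByTwo

variable {K : Type*} [Field K] {A : Matrix (Fin 2) (Fin 2) K} {s ν₁ ν₂ : K}

lemma Matrix.mul_eq_det_of_mulVec_vecCons_one (h : A *ᵥ ![1, s] = ν₁ • ![1, s])
    (htr : ν₁ + ν₂ = A.trace) : ν₁ * ν₂ = A.det := by
  have h0 := congrFun h 0
  have h1 := congrFun h 1
  simp only [mulVec, dotProduct, Fin.sum_univ_two, Pi.smul_apply, smul_eq_mul, cons_val_zero,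
    cons_val_one, mul_one] at h0 h1
  rw [trace_fin_two] at htr
  rw [det_fin_two]
  linear_combination (ν₁ - A 1 1) * h0 + A 0 1 * h1 + ν₁ * htr

lemma Matrix.spectrum_fin_two (htr : ν₁ + ν₂ = A.trace) (hdet : ν₁ * ν₂ = A.det) :
    spectrum K A = {ν₁, ν₂} := by
  ext z
  rw [mem_spectrum_iff_isRoot_charpoly, charpoly_fin_two, ← htr, ← hdet]
  simp only [IsRoot, eval_add, eval_sub, eval_mul, eval_pow, eval_X, eval_C, Set.mem_insert_iff,
    Set.mem_singleton_iff]
  rw [← sub_eq_zero (a := z) (b := ν₁), ← sub_eq_zero (a := z) (b := ν₂), ← mul_eq_zero]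
  ring_nf

lemma Matrix.spectrum_map_fin_two {L : Type*} [Field L] (f : K →+* L)
    (htr : ν₁ + ν₂ = A.trace) (hdet : ν₁ * ν₂ = A.det) :
    spectrum L (A.map f) = {f ν₁, f ν₂} :=
  spectrum_fin_two (by rw [← map_add, htr, AddMonoidHom.map_trace f])
    (by rw [← map_mul, hdet, RingHom.map_det]; rfl)

lemma Matrix.isUnit_one_sub_of_fin_two (htr : ν₁ + ν₂ = A.trace) (hdet : ν₁ * ν₂ = A.det)
    (h₁ : ν₁ ≠ 1) (h₂ : ν₂ ≠ 1) : IsUnit (1 - A) := by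
  rw [← map_one (algebraMap K _), ← spectrum.notMem_iff, spectrum_fin_two htr hdet]
  simp [h₁.symm, h₂.symm]

end TwoByTwo

lemma Matrix.existsUnique_mulVec_add_eq_self {n K : Type*} [Fintype n] [DecidableEq n] [Field K]
    {A : Matrix n n K} (h : IsUnit (1 - A)) (w : n → K) : ∃! x, A *ᵥ x + w = x := by
  have hbij : Function.Bijective (1 - A).mulVec :=
    ⟨mulVec_injective_iff_isUnit.2 h, mulVec_surjective_iff_isUnit.2 h⟩
  refine (existsUnique_congr fun x => ?_).2 (hbij.existsUnique w)
  rw [sub_mulVec, one_mulVec, sub_eq_iff_eq_add', eq_comm]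

def unstableCone (l : ℝ) : Set (Fin 2 → ℝ) := {v | l * |v 1| ≤ |v 0|}

lemma vecCons_one_mem_unstableCone_iff {l s : ℝ} (hl : 0 < l) :
    ![1, s] ∈ unstableCone l ↔ s ∈ Set.Icc (-l⁻¹) l⁻¹ := by
  rw [Set.mem_Icc, ← abs_le, ← mul_one l⁻¹, le_inv_mul_iff₀ hl]
  simp [unstableCone]

lemma exists_eigenvector_of_mapsTo_unstableCone {A : Matrix (Fin 2) (Fin 2) ℝ} {l K : ℝ}
    (hl : 0 < l) (hK : 0 < K)
    (hA : ∀ v ∈ unstableCone l, A *ᵥ v ∈ unstableCone l ∧ K * |v 0| ≤ |(A *ᵥ v) 0|) :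
    ∃ s ν : ℝ, A *ᵥ ![1, s] = ν • ![1, s] ∧ K ≤ |ν| := by
  set f : ℝ → Fin 2 → ℝ := fun s => A *ᵥ ![1, s]
  have hf : ∀ s ∈ Set.Icc (-l⁻¹) l⁻¹, f s ∈ unstableCone l ∧ K ≤ |f s 0| := fun s hs => by
    simpa only [cons_val_zero, abs_one, mul_one] using
      hA _ ((vecCons_one_mem_unstableCone_iff hl).2 hs)
  have hf0 : ∀ s ∈ Set.Icc (-l⁻¹) l⁻¹, f s 0 ≠ 0 := fun s hs h0 => by
    have := (hf s hs).2
    rw [h0, abs_zero] at this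
    exact hK.not_ge this
  obtain ⟨s, hs, hfix⟩ : ∃ s ∈ Set.Icc (-l⁻¹) l⁻¹, f s 1 / f s 0 = s := by
    refine exists_mem_Icc_isFixedPt_of_mapsTo ?_ (by simp [hl.le]) fun s hs => ?_
    · refine ContinuousOn.div ?_ ?_ hf0 <;> exact Continuous.continuousOn (by fun_prop)
    · rw [← vecCons_one_mem_unstableCone_iff hl]
      have := (hf s hs).1
      simp only [unstableCone, Set.mem_ofPred_eq, cons_val_zero, cons_val_one, abs_one] at this ⊢
      rwa [abs_div, ← mul_div_assoc, div_le_one (abs_pos.2 (hf0 s hs))]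
  refine ⟨s, f s 0, ?_, (hf s hs).2⟩
  ext i
  fin_cases i
  · simp [f]
  · rw [div_eq_iff (hf0 s hs)] at hfix
    simp [f, hfix, mul_comm]

def loziMap (a b σ : ℝ) (p : ℝ × ℝ) : ℝ × ℝ := (-σ * a * p.1 - b * p.2 + (a - b - 1), p.1)

def loziJacobian (a b σ : ℝ) : Matrix (Fin 2) (Fin 2) ℝ := !![-σ * a, -b; 1, 0]

def loziWordJacobian (a b : ℝ) (I : List ℝ) : Matrix (Fin 2) (Fin 2) ℝ :=
  (I.reverse.map (loziJacobian a b)).prod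

section Lozi

variable {a b l σ : ℝ} {J : List ℝ} {v : Fin 2 → ℝ}

lemma loziWordJacobian_cons :
    loziWordJacobian a b (σ :: J) = loziWordJacobian a b J * loziJacobian a b σ := by
  simp [loziWordJacobian]

lemma det_loziWordJacobian : (loziWordJacobian a b J).det = b ^ J.length := by
  induction J with
  | nil => simp [loziWordJacobian]
  | cons σ J ih =>
    rw [loziWordJacobian_cons, det_mul, ih, List.length_cons, pow_succ]
    simp [loziJacobian, det_fin_two_of]

lemma loziJacobian_mulVec_zero : (loziJacobian a b σ *ᵥ v) 0 = -σ * a * v 0 - b * v 1 := by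
  simp [loziJacobian, mulVec, dotProduct, Fin.sum_univ_two, sub_eq_add_neg]

lemma loziJacobian_mulVec_one : (loziJacobian a b σ *ᵥ v) 1 = v 0 := by
  simp [loziJacobian, mulVec, dotProduct, Fin.sum_univ_two]

lemma loziJacobian_mulVec_mem_unstableCone (hl : 0 < l) (hb : 0 ≤ b)
    (hroot : l * l + b = a * l) (hσ : |σ| = 1) (hv : v ∈ unstableCone l) :
    loziJacobian a b σ *ᵥ v ∈ unstableCone l := by
  have ha : 0 ≤ a := by nlinarith
  have hσav : |-σ * a * v 0| = a * |v 0| := by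
    rw [abs_mul, abs_mul, abs_neg, hσ, abs_of_nonneg ha, one_mul]
  have hbv : |b * v 1| = b * |v 1| := by rw [abs_mul, abs_of_nonneg hb]
  have hrev := abs_sub_abs_le_abs_sub (-σ * a * v 0) (b * v 1)
  change l * |v 1| ≤ |v 0| at hv
  change l * |(loziJacobian a b σ *ᵥ v) 1| ≤ |(loziJacobian a b σ *ᵥ v) 0|
  rw [loziJacobian_mulVec_zero, loziJacobian_mulVec_one]
  refine le_of_mul_le_mul_left ?_ hl
  calc l * (l * |v 0|) = l * (a * |v 0|) - b * |v 0| := by linear_combination |v 0| * hroot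
    _ ≤ l * (a * |v 0|) - b * (l * |v 1|) := by gcongr
    _ = l * (|-σ * a * v 0| - |b * v 1|) := by rw [hσav, hbv]; ring
    _ ≤ l * |-σ * a * v 0 - b * v 1| := by gcongr

lemma loziWordJacobian_mulVec_mem_unstableCone (hl : 0 < l) (hb : 0 ≤ b)
    (hroot : l * l + b = a * l) (hJ : ∀ σ ∈ J, |σ| = 1) (hv : v ∈ unstableCone l) :
    loziWordJacobian a b J *ᵥ v ∈ unstableCone l ∧
      l ^ J.length * |v 0| ≤ |(loziWordJacobian a b J *ᵥ v) 0| := by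
  induction J generalizing v with
  | nil => simpa [loziWordJacobian] using hv
  | cons σ J ih =>
    have hσv := loziJacobian_mulVec_mem_unstableCone hl hb hroot (hJ σ List.mem_cons_self) hv
    obtain ⟨hmem, hexp⟩ := ih (fun τ hτ => hJ τ (List.mem_cons_of_mem σ hτ)) hσv
    rw [loziWordJacobian_cons, ← mulVec_mulVec]
    refine ⟨hmem, ?_⟩
    have hstep : l * |v 0| ≤ |(loziJacobian a b σ *ᵥ v) 0| := by
      simpa only [unstableCone, Set.mem_ofPred_eq, loziJacobian_mulVec_one] using hσv
    calc l ^ (σ :: J).length * |v 0| = l ^ J.length * (l * |v 0|) := by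
          rw [List.length_cons, pow_succ]; ring
      _ ≤ l ^ J.length * |(loziJacobian a b σ *ᵥ v) 0| := by gcongr
      _ ≤ _ := hexp

lemma exists_saddle_eigenvalues_loziWordJacobian (hl : 0 < l) (hb : 0 ≤ b)
    (hroot : l * l + b = a * l) (hJ : ∀ σ ∈ J, |σ| = 1) :
    ∃ ν₁ ν₂ : ℝ, ν₁ + ν₂ = (loziWordJacobian a b J).trace ∧
      ν₁ * ν₂ = (loziWordJacobian a b J).det ∧
      l ^ J.length ≤ |ν₁| ∧ |ν₂| ≤ (b / l) ^ J.length := by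
  obtain ⟨s, ν₁, hv, hν₁⟩ := exists_eigenvector_of_mapsTo_unstableCone hl (pow_pos hl J.length)
    fun v hv => loziWordJacobian_mulVec_mem_unstableCone hl hb hroot hJ hv
  set A := loziWordJacobian a b J
  obtain ⟨ν₂, htr⟩ : ∃ ν₂, ν₁ + ν₂ = A.trace := ⟨A.trace - ν₁, add_sub_cancel ν₁ _⟩
  have hdet : ν₁ * ν₂ = A.det := mul_eq_det_of_mulVec_vecCons_one hv htr
  have habs : |ν₁| * |ν₂| = l ^ J.length * (b / l) ^ J.length := by
    rw [← abs_mul, hdet, det_loziWordJacobian, ← mul_pow, mul_div_cancel₀ b hl.ne',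
      abs_of_nonneg (by positivity)]
  refine ⟨ν₁, ν₂, htr, hdet, hν₁, le_of_mul_le_mul_left ?_ (pow_pos hl J.length)⟩
  calc l ^ J.length * |ν₂| ≤ |ν₁| * |ν₂| := by gcongr
    _ = _ := habs

lemma finTwoArrowEquiv_symm_loziMap (p : ℝ × ℝ) :
    (finTwoArrowEquiv ℝ).symm (loziMap a b σ p) =
      loziJacobian a b σ *ᵥ (finTwoArrowEquiv ℝ).symm p + ![a - b - 1, 0] := by
  ext i
  fin_cases i <;>
    simp only [Fin.zero_eta, Fin.mk_one, Pi.add_apply, loziJacobian_mulVec_zero,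
      loziJacobian_mulVec_one, finTwoArrowEquiv_symm_apply, loziMap, cons_val_zero, cons_val_one,
      cons_val_fin_one]
  ring

lemma finTwoArrowEquiv_symm_foldl_loziMap (J : List ℝ) (p : ℝ × ℝ) :
    (finTwoArrowEquiv ℝ).symm (J.foldl (fun p σ => loziMap a b σ p) p) =
      loziWordJacobian a b J *ᵥ (finTwoArrowEquiv ℝ).symm p +
        (finTwoArrowEquiv ℝ).symm (J.foldl (fun p σ => loziMap a b σ p) 0) := by
  induction J generalizing p with
  | nil => simp [loziWordJacobian]
  | cons σ J ih =>
    rw [List.foldl_cons, List.foldl_cons, ih, ih (loziMap a b σ 0),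
      finTwoArrowEquiv_symm_loziMap, finTwoArrowEquiv_symm_loziMap, loziWordJacobian_cons,
      ← mulVec_mulVec, mulVec_add, mulVec_add]
    have he0 : (finTwoArrowEquiv ℝ).symm (0 : ℝ × ℝ) = 0 := by simp
    rw [he0, mulVec_zero, mulVec_zero, zero_add, add_assoc]

lemma existsUnique_foldl_loziMap_eq_self (h : IsUnit (1 - loziWordJacobian a b J)) :
    ∃! θ, J.foldl (fun p σ => loziMap a b σ p) θ = θ := by
  let e := (finTwoArrowEquiv ℝ).symm
  refine (e.existsUnique_congr fun θ => ?_).2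
    (existsUnique_mulVec_add_eq_self h (e (J.foldl (fun p σ => loziMap a b σ p) 0)))
  rw [← e.injective.eq_iff, finTwoArrowEquiv_symm_foldl_loziMap]

end Lozi

theorem lozi_formal_periodic_point_general (a b : ℝ) (hab : a > b + 1) (hb0 : 0 ≤ b)
    (I : List ℝ) (hI : ∀ σ ∈ I, σ = -1 ∨ σ = 1) (hlen : 1 ≤ I.length) :
    let l := (a + Real.sqrt (a ^ 2 - 4 * b)) / 2
    let μ := b / l
    let lozi : ℝ → ℝ × ℝ → ℝ × ℝ :=
      fun σ p => (-σ * a * p.1 - b * p.2 + (a - b - 1), p.1)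
    let ΛI : ℝ × ℝ → ℝ × ℝ := fun v => I.foldl (fun p σ => lozi σ p) v
    let A : Matrix (Fin 2) (Fin 2) ℝ :=
      (I.reverse.map (fun σ => !![-σ * a, -b; 1, 0])).prod
    (∃! θ : ℝ × ℝ, ΛI θ = θ) ∧
    (∃ ν₁ ν₂ : ℂ, spectrum ℂ (A.map (Complex.ofReal : ℝ → ℂ)) = {ν₁, ν₂} ∧
      l ^ I.length ≤ ‖ν₁‖ ∧ 1 < l ^ I.length ∧
      ‖ν₂‖ ≤ μ ^ I.length ∧ μ ^ I.length < 1) := by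
  intro l μ lozi ΛI A
  have hl : 1 < l := lt_largerRoot (by nlinarith)
  have hl0 : 0 < l := by linarith
  have hroot : l * l + b = a * l := largerRoot_mul_self_add (by nlinarith [sq_nonneg (a - 2)])
  have hM : I.length ≠ 0 := by omega
  have hσ : ∀ σ ∈ I, |σ| = 1 := fun σ hσ => by rcases hI σ hσ with rfl | rfl <;> norm_num
  obtain ⟨ν₁, ν₂, htr, hdet, hν₁, hν₂⟩ :=
    exists_saddle_eigenvalues_loziWordJacobian hl0 hb0 hroot hσ
  have hlM : 1 < l ^ I.length := one_lt_pow₀ hl hM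
  have hμM : μ ^ I.length < 1 := pow_lt_one₀ (by positivity) (div_largerRoot_lt_one hab) hM
  have hunit : IsUnit (1 - A) := isUnit_one_sub_of_fin_two htr hdet
    (by rintro rfl; rw [abs_one] at hν₁; linarith) (by rintro rfl; rw [abs_one] at hν₂; linarith)
  refine ⟨existsUnique_foldl_loziMap_eq_self hunit, ν₁, ν₂,
    spectrum_map_fin_two Complex.ofRealHom htr hdet, ?_, hlM, ?_, hμM⟩ <;>
    rwa [Complex.norm_real, Real.norm_eq_abs]

theorem lozi_formal_periodic_point (a b : ℝ) (hab : a > b + 1) (hb0 : 0 ≤ b) (hb1 : b ≤ 1)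
    (I : List ℝ) (hI : ∀ σ ∈ I, σ = -1 ∨ σ = 1) (hlen : 1 ≤ I.length) :
    let l := (a + Real.sqrt (a ^ 2 - 4 * b)) / 2
    let μ := b / l
    let lozi : ℝ → ℝ × ℝ → ℝ × ℝ :=
      fun σ p => (-σ * a * p.1 - b * p.2 + (a - b - 1), p.1)
    let ΛI : ℝ × ℝ → ℝ × ℝ := fun v => I.foldl (fun p σ => lozi σ p) v
    let A : Matrix (Fin 2) (Fin 2) ℝ :=
      (I.reverse.map (fun σ => !![-σ * a, -b; 1, 0])).prod
    (∃! θ : ℝ × ℝ, ΛI θ = θ) ∧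
    (∃ ν₁ ν₂ : ℂ, spectrum ℂ (A.map (Complex.ofReal : ℝ → ℂ)) = {ν₁, ν₂} ∧
      l ^ I.length ≤ ‖ν₁‖ ∧ 1 < l ^ I.length ∧
      ‖ν₂‖ ≤ μ ^ I.length ∧ μ ^ I.length < 1) :=
  lozi_formal_periodic_point_general a b hab hb0 I hI hlen
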